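/- arXiv:1112.5090 — 2 statements merged into one kernel-verified Lean document; each statement's English description precedes it below -/
import Mathlib

section
/- For all positive integers h and t, S(h,t,1) = (gcd(t,h)/t²) · ∏_{p|t, h_p|t_p} (1 + 1/p) · ∏_{p∤t} (1 − gcd(p,h)/(p(p−1))), where the first product is over primes p dividing t whose p-part of h divides the p-part of t, and the second (infinite) product is over all primes p not dividing t. -/
open Polynomial

/-- The Wagstaff sum `S(h,t,m) = ∑_{n ≥ 1, m ∣ nt} μ(n)·gcd(nt,h)/(nt·φ(nt))`. -/
noncomputable def wagstaffS (h t m : ℕ) : ℝ :=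
  ∑' n : ℕ, if 0 < n ∧ m ∣ n * t then
      (ArithmeticFunction.moebius n : ℝ) * (Nat.gcd (n * t) h : ℝ) /
        (↑(n * t) * ↑(Nat.totient (n * t)))
    else 0

/-- The Artin constant `A = ∏_p (1 - 1/(p(p-1)))`. -/
noncomputable def artinConst : ℝ :=
  ∏' p : Nat.Primes, (1 - 1 / ((p : ℝ) * ((p : ℝ) - 1)))

/-- `E_1(m_2)`, depending also on the 2-parts `h_2` and `t_2`. -/
noncomputable def E1 (h2 t2 m2 : ℕ) : ℝ :=
  if m2 ∣ t2 then 1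
  else if m2 = 2 * t2 ∧ Nat.lcm 2 h2 ∣ t2 then -1/3
  else if m2 = 2 * t2 ∧ ¬ Nat.lcm 2 h2 ∣ t2 then -1
  else 0

/-- `E_2(m_2)`, depending also on the 2-part `t_2`. -/
noncomputable def E2 (t2 m2 : ℕ) : ℝ :=
  if m2 ∣ t2 then 1
  else if m2 = 2 * t2 ∧ m2 ≠ 2 then -1/3
  else if m2 = 2 * t2 ∧ m2 = 2 then -1
  else 0

/-- `[F_p : ℚ]`, where `F_p = ℚ(ζ_p, g^{1/p})` is the splitting field of `X^p - g` over `ℚ`. -/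
noncomputable def FpDeg (g : ℚ) (p : ℕ) : ℕ :=
  Module.finrank ℚ ((X ^ p - C g : ℚ[X]).SplittingField)

/-- `A(g,t) = (gcd(t,h)/t²)·∏_{p∣t, h_p∣t_p}(1+1/p)·∏_{p∤t}(1-1/[F_p:ℚ])`. -/
noncomputable def Agt (g : ℚ) (h t : ℕ) : ℝ :=
  ((Nat.gcd t h : ℝ) / (t : ℝ) ^ 2) *
    (∏ p ∈ t.primeFactors, if ordProj[p] h ∣ ordProj[p] t then 1 + 1 / (p : ℝ) else 1) *
    ∏' p : Nat.Primes, (if (p : ℕ) ∣ t then 1 else 1 - 1 / (FpDeg g (p : ℕ) : ℝ))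

/-- `Π_1 = ∏_{p ∣ d, p ∤ 2t} (-1/([F_p:ℚ]-1))`, where `d` is (the absolute value of) `d(g₀)`. -/
noncomputable def Pi1 (g : ℚ) (t d : ℕ) : ℝ :=
  ∏ p ∈ d.primeFactors, (if ¬ p ∣ 2 * t then -1 / ((FpDeg g p : ℝ) - 1) else 1)

/-- Discriminant of `ℚ(√d)` for a squarefree integer `d`: `d` if `d ≡ 1 (mod 4)`, else `4d`. -/
def sqDisc (d : ℤ) : ℤ := if d % 4 = 1 then d else 4 * d

/-- `g₀` is not an exact power of a rational number. -/
def NotExactPower (g0 : ℚ) : Prop := ∀ (r : ℚ) (k : ℕ), 2 ≤ k → g0 ≠ r ^ k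


section WagstaffAux

open ArithmeticFunction

lemma gcdA {m n t h : ℕ} (hm : m ≠ 0) (hn : n ≠ 0) (ht : t ≠ 0) (hh : h ≠ 0)
    (hco : Nat.Coprime m n) :
    Nat.gcd (m * n * t) h * Nat.gcd t h = Nat.gcd (m * t) h * Nat.gcd (n * t) h := by
  have hmt : m * t ≠ 0 := by positivity
  have hnt : n * t ≠ 0 := by positivity
  have hmnt : m * n * t ≠ 0 := by positivity
  have key : ∀ q : ℕ, m.factorization q = 0 ∨ n.factorization q = 0 := by
    intro q
    by_contra hq
    push_neg at hq
    have h1 : q ∈ m.primeFactors := by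
      rw [← Nat.support_factorization]; exact Finsupp.mem_support_iff.mpr hq.1
    have h2 : q ∈ n.primeFactors := by
      rw [← Nat.support_factorization]; exact Finsupp.mem_support_iff.mpr hq.2
    exact Finset.disjoint_left.mp hco.disjoint_primeFactors h1 h2
  apply Nat.factorization_inj (by simp [Nat.gcd_eq_zero_iff, hmnt, hh, ht]) (by simp [Nat.gcd_eq_zero_iff, hmt, hnt, hh])
  rw [Nat.factorization_mul (by simp [Nat.gcd_eq_zero_iff, hmnt, hh]) (by simp [Nat.gcd_eq_zero_iff, ht, hh]),
    Nat.factorization_mul (by simp [Nat.gcd_eq_zero_iff, hmt, hh]) (by simp [Nat.gcd_eq_zero_iff, hnt, hh]),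
    Nat.factorization_gcd hmnt hh, Nat.factorization_gcd ht hh,
    Nat.factorization_gcd hmt hh, Nat.factorization_gcd hnt hh]
  ext q
  simp only [Finsupp.add_apply, Finsupp.inf_apply,
    Nat.factorization_mul hm hn, Nat.factorization_mul (mul_ne_zero hm hn) ht,
    Nat.factorization_mul hm ht, Nat.factorization_mul hn ht, Finsupp.add_apply]
  rcases key q with h0 | h0 <;> simp [h0] <;> omega

lemma totA {m n t : ℕ} (ht : t ≠ 0) (hco : Nat.Coprime m n) :
    Nat.totient (m * n * t) * Nat.totient t = Nat.totient (m * t) * Nat.totient (n * t) := by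
  have h1 : Nat.gcd (m * t) (n * t) = t := by
    rw [Nat.gcd_mul_right, hco.gcd_eq_one, one_mul]
  have k1 := Nat.totient_gcd_mul_totient_mul (m * t) (n * t)
  rw [h1] at k1
  have h2 : Nat.gcd (m * n * t) t = t := Nat.gcd_eq_right ⟨m * n, by ring⟩
  have k2 := Nat.totient_gcd_mul_totient_mul (m * n * t) t
  rw [h2] at k2
  have hφt : 0 < Nat.totient t := Nat.totient_pos.mpr (Nat.pos_of_ne_zero ht)
  have htpos : 0 < t := Nat.pos_of_ne_zero ht
  have h3 : Nat.totient (m * n * t * t) = Nat.totient (m * n * t) * t :=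
    Nat.eq_of_mul_eq_mul_left hφt (k2.trans (by ring))
  have h4 : m * t * (n * t) = m * n * t * t := by ring
  rw [h4, h3] at k1
  apply Nat.eq_of_mul_eq_mul_right htpos
  calc Nat.totient (m * n * t) * Nat.totient t * t
      = Nat.totient t * (Nat.totient (m * n * t) * t) := by ring
    _ = Nat.totient (m * t) * Nat.totient (n * t) * t := k1

lemma gcdP {p t h : ℕ} (hp : p.Prime) (ht : t ≠ 0) (hh : h ≠ 0) :
    Nat.gcd (p * t) h =
      Nat.gcd t h * (if h.factorization p ≤ t.factorization p then 1 else p) := by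
  have hpt : p * t ≠ 0 := mul_ne_zero hp.ne_zero ht
  have hg1 : Nat.gcd (p * t) h ≠ 0 := by simp [Nat.gcd_eq_zero_iff, hpt, hh]
  have hg2 : Nat.gcd t h ≠ 0 := by simp [Nat.gcd_eq_zero_iff, ht, hh]
  by_cases hle : h.factorization p ≤ t.factorization p
  · rw [if_pos hle, mul_one]
    apply Nat.factorization_inj hg1 hg2
    rw [Nat.factorization_gcd hpt hh, Nat.factorization_gcd ht hh]
    ext q
    simp only [Finsupp.inf_apply, Nat.factorization_mul hp.ne_zero ht,
      Finsupp.add_apply, hp.factorization, Finsupp.single_apply]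
    rcases eq_or_ne p q with rfl | hq
    · simp only [if_pos rfl, if_true, eq_self_iff_true]
      omega
    · simp only [if_neg hq]
      omega
  · rw [if_neg hle]
    apply Nat.factorization_inj hg1 (mul_ne_zero hg2 hp.ne_zero)
    rw [Nat.factorization_mul hg2 hp.ne_zero,
      Nat.factorization_gcd hpt hh, Nat.factorization_gcd ht hh]
    ext q
    simp only [Finsupp.inf_apply, Nat.factorization_mul hp.ne_zero ht,
      Finsupp.add_apply, hp.factorization, Finsupp.single_apply]
    rcases eq_or_ne p q with rfl | hq
    · simp only [if_pos rfl, if_true, eq_self_iff_true]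
      omega
    · simp only [if_neg hq]
      omega

lemma odd_le_totient_sq : ∀ n : ℕ, ¬ 2 ∣ n → n ≤ Nat.totient n ^ 2 := by
  intro n
  induction n using Nat.recOnPosPrimePosCoprime with
  | prime_pow p k hp hk =>
    intro hodd
    have hpp : p.Prime := hp
    have hp3 : 3 ≤ p := by
      rcases hpp.two_le.lt_or_eq with h | h
      · omega
      · exfalso; exact hodd (h ▸ dvd_pow_self p hk.ne')
    rw [Nat.totient_prime_pow hpp hk, mul_pow, ← pow_mul]
    have h1 : p ^ k = p ^ (k-1) * p := by
      rw [← pow_succ]; congr 1; omega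
    rw [h1]
    have h2 : p ≤ (p - 1) ^ 2 := by
      obtain ⟨q, rfl⟩ : ∃ q, p = q + 1 := ⟨p - 1, by omega⟩
      have hq : 2 ≤ q := by omega
      simp only [Nat.add_sub_cancel]
      nlinarith
    have h3 : p ^ (k-1) ≤ p ^ ((k-1) * 2) := Nat.pow_le_pow_right hpp.pos (by omega)
    exact Nat.mul_le_mul h3 h2
  | zero => intro h; exact absurd ⟨0, rfl⟩ h
  | one => intro _; simp
  | coprime a b ha hb hab iha ihb =>
    intro hodd
    have h2a : ¬ 2 ∣ a := fun h => hodd (h.mul_right b)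
    have h2b : ¬ 2 ∣ b := fun h => hodd (h.mul_left a)
    rw [Nat.totient_mul hab, mul_pow]
    exact Nat.mul_le_mul (iha h2a) (ihb h2b)

lemma le_two_mul_totient_sq (n : ℕ) (hn : n ≠ 0) : n ≤ 2 * Nat.totient n ^ 2 := by
  set k := n.factorization 2 with hk
  set m := ordCompl[2] n with hm
  have hmd : ¬ 2 ∣ m := Nat.not_dvd_ordCompl Nat.prime_two hn
  have hco : Nat.Coprime (2 ^ k) m :=
    Nat.Coprime.pow_left _ ((Nat.Prime.coprime_iff_not_dvd Nat.prime_two).mpr hmd)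
  have hself : 2 ^ k * m = n := Nat.ordProj_mul_ordCompl_eq_self n 2
  have h1 : m ≤ Nat.totient m ^ 2 := odd_le_totient_sq m hmd
  have h2 : 2 ^ k ≤ 2 * Nat.totient (2 ^ k) ^ 2 := by
    rcases Nat.eq_zero_or_pos k with hk0 | hkpos
    · rw [hk0]; simp
    · rw [Nat.totient_prime_pow Nat.prime_two hkpos]
      have : 2 ^ k ≤ 2 * (2 ^ (k-1)) ^ 2 := by
        rw [← pow_mul, ← pow_succ']
        exact Nat.pow_le_pow_right (by norm_num) (by omega)
      simpa using this
  calc n = 2 ^ k * m := hself.symm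
    _ ≤ (2 * Nat.totient (2 ^ k) ^ 2) * (Nat.totient m ^ 2) := Nat.mul_le_mul h2 h1
    _ = 2 * (Nat.totient (2 ^ k) * Nat.totient m) ^ 2 := by ring
    _ = 2 * Nat.totient n ^ 2 := by rw [← Nat.totient_mul hco, hself]

lemma sqrt_le_totient (n : ℕ) (hn : n ≠ 0) :
    Real.sqrt n ≤ Real.sqrt 2 * Nat.totient n := by
  have h := le_two_mul_totient_sq n hn
  have h' : (n : ℝ) ≤ 2 * (Nat.totient n : ℝ) ^ 2 := by exact_mod_cast h
  calc Real.sqrt n ≤ Real.sqrt (2 * (Nat.totient n : ℝ) ^ 2) := Real.sqrt_le_sqrt h'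
    _ = Real.sqrt 2 * Real.sqrt ((Nat.totient n : ℝ) ^ 2) := Real.sqrt_mul (by norm_num) _
    _ = Real.sqrt 2 * Nat.totient n := by
        rw [Real.sqrt_sq (by positivity)]


noncomputable def wg (h t : ℕ) (n : ℕ) : ℝ :=
  if n = 0 then 0 else
    ((t : ℝ) * (Nat.totient t : ℝ) / (Nat.gcd t h : ℝ)) *
      ((moebius n : ℝ) * (Nat.gcd (n * t) h : ℝ) /
        ((↑(n * t) : ℝ) * (↑(Nat.totient (n * t)) : ℝ)))

variable {h t : ℕ}

lemma wg_zero : wg h t 0 = 0 := by simp [wg]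

lemma wg_one (hh : 0 < h) (ht : 0 < t) : wg h t 1 = 1 := by
  have h1 : (0:ℝ) < (t : ℝ) * (Nat.totient t : ℝ) := by
    have := Nat.totient_pos.mpr ht
    positivity
  have h2 : (0:ℝ) < (Nat.gcd t h : ℝ) := by
    have : 0 < Nat.gcd t h := Nat.gcd_pos_of_pos_left _ ht
    positivity
  simp only [wg, one_ne_zero, if_neg, one_mul, moebius_apply_one, Int.cast_one]
  field_simp
  simp

lemma wg_mul (hh : 0 < h) (ht : 0 < t) {m n : ℕ} (hco : Nat.Coprime m n) :
    wg h t (m * n) = wg h t m * wg h t n := by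
  rcases eq_or_ne m 0 with rfl | hm
  · have : n = 1 := by simpa [Nat.coprime_zero_left] using hco
    subst this
    simp [wg_zero, wg_one hh ht]
  rcases eq_or_ne n 0 with rfl | hn
  · have : m = 1 := by simpa [Nat.coprime_zero_right] using hco
    subst this
    simp [wg_zero, wg_one hh ht]
  have ht' : t ≠ 0 := ht.ne'
  have hh' : h ≠ 0 := hh.ne'
  have hφ : ∀ k : ℕ, k ≠ 0 → (0:ℝ) < (Nat.totient k : ℝ) := fun k hk => by
    exact_mod_cast Nat.totient_pos.mpr (Nat.pos_of_ne_zero hk)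
  have hμ : (moebius (m * n) : ℝ) = (moebius m : ℝ) * (moebius n : ℝ) := by
    rw [← Int.cast_mul, isMultiplicative_moebius.map_mul_of_coprime hco]
  -- the two natural-number identities
  have hG := gcdA hm hn ht' hh' hco
  have hT := totA (m := m) (n := n) ht' hco
  have hGr : (Nat.gcd (m * n * t) h : ℝ) * (Nat.gcd t h : ℝ)
      = (Nat.gcd (m * t) h : ℝ) * (Nat.gcd (n * t) h : ℝ) := by exact_mod_cast hG
  have hTr : (Nat.totient (m * n * t) : ℝ) * (Nat.totient t : ℝ)
      = (Nat.totient (m * t) : ℝ) * (Nat.totient (n * t) : ℝ) := by exact_mod_cast hT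
  have hne : ∀ k : ℕ, k ≠ 0 → ((k * t : ℕ) : ℝ) ≠ 0 := fun k hk => by
    push_cast; positivity
  simp only [wg, if_neg hm, if_neg hn, if_neg (mul_ne_zero hm hn)]
  rw [hμ]
  have e1 : ((m * n * t : ℕ) : ℝ) = (m : ℝ) * n * t := by push_cast; ring
  have e2 : ((m * t : ℕ) : ℝ) = (m : ℝ) * t := by push_cast; ring
  have e3 : ((n * t : ℕ) : ℝ) = (n : ℝ) * t := by push_cast; ring
  have hgcdth : (Nat.gcd t h : ℝ) ≠ 0 := by
    have : 0 < Nat.gcd t h := Nat.gcd_pos_of_pos_left _ ht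
    positivity
  have hφmnt := hφ _ (show m * n * t ≠ 0 by positivity)
  have hφmt := hφ _ (show m * t ≠ 0 by positivity)
  have hφnt := hφ _ (show n * t ≠ 0 by positivity)
  have hφt := hφ _ ht'
  have hm' : (0:ℝ) < m := by exact_mod_cast Nat.pos_of_ne_zero hm
  have hn' : (0:ℝ) < n := by exact_mod_cast Nat.pos_of_ne_zero hn
  have ht'' : (0:ℝ) < t := by exact_mod_cast ht
  rw [e1, e2, e3]
  field_simp
  linear_combination ((moebius m : ℝ) * (moebius n : ℝ) *
      (Nat.totient (m*t) : ℝ) * (Nat.totient (n*t) : ℝ)) * hGr -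
    ((moebius m : ℝ) * (moebius n : ℝ) *
      (Nat.gcd (m*t) h : ℝ) * (Nat.gcd (n*t) h : ℝ)) * hTr
variable {h t : ℕ}

lemma wg_summable (hh : 0 < h) (ht : 0 < t) : Summable (fun n => ‖wg h t n‖) := by
  have hφt : 0 < Nat.totient t := Nat.totient_pos.mpr ht
  have hg0 : 0 < Nat.gcd t h := Nat.gcd_pos_of_pos_left _ ht
  set C : ℝ := (t : ℝ) * (Nat.totient t : ℝ) / (Nat.gcd t h : ℝ) with hC
  have hCpos : 0 < C := by positivity
  set K : ℝ := C * h * Real.sqrt 2 / ((t : ℝ) * (Nat.totient t : ℝ)) with hK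
  have hKpos : 0 < K := by positivity
  have hsqrt2 : (0:ℝ) < Real.sqrt 2 := by positivity
  have key : ∀ n : ℕ, ((n:ℝ) ^ ((3:ℝ)/2)) = (n:ℝ) * Real.sqrt n := by
    intro n
    rcases eq_or_ne n 0 with rfl | hn
    · simp [Real.zero_rpow (by norm_num : ((3:ℝ)/2) ≠ 0)]
    · have hn' : (0:ℝ) < n := by exact_mod_cast Nat.pos_of_ne_zero hn
      rw [show ((3:ℝ)/2) = 1 + 1/2 by norm_num, Real.rpow_add hn', Real.rpow_one,
        Real.sqrt_eq_rpow]
  have hb : Summable (fun n : ℕ => K * ((n:ℝ) * Real.sqrt n)⁻¹) := by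
    have h1 : Summable (fun n : ℕ => ((n:ℝ) ^ ((3:ℝ)/2))⁻¹) :=
      Real.summable_nat_rpow_inv.mpr (by norm_num)
    exact (h1.mul_left K).congr (fun n => by rw [key n])
  apply Summable.of_nonneg_of_le (fun n => norm_nonneg _) _ hb
  intro n
  rcases eq_or_ne n 0 with rfl | hn
  · simp [wg_zero]
  have hnpos : 0 < n := Nat.pos_of_ne_zero hn
  have hnR : (0:ℝ) < n := by exact_mod_cast hnpos
  have hφn : 0 < Nat.totient n := Nat.totient_pos.mpr hnpos
  have hφnR : (0:ℝ) < Nat.totient n := by exact_mod_cast hφn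
  have hnt : 0 < n * t := by positivity
  have hφnt : 0 < Nat.totient (n * t) := Nat.totient_pos.mpr hnt
  have hDr : (0:ℝ) < ((n * t : ℕ):ℝ) * ((Nat.totient (n * t) : ℕ):ℝ) := by
    have : (0:ℝ) < ((n*t : ℕ):ℝ) := by exact_mod_cast hnt
    have h2 : (0:ℝ) < ((Nat.totient (n*t) : ℕ):ℝ) := by exact_mod_cast hφnt
    positivity
  have habs : ‖wg h t n‖ =
      C * (|(ArithmeticFunction.moebius n : ℝ)| * (Nat.gcd (n * t) h : ℝ) /
        (((n * t : ℕ):ℝ) * ((Nat.totient (n * t) : ℕ):ℝ))) := by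
    rw [Real.norm_eq_abs, wg, if_neg hn, abs_mul, abs_of_pos hCpos, abs_div, abs_mul,
      abs_of_nonneg (by positivity : (0:ℝ) ≤ (Nat.gcd (n * t) h : ℝ)),
      abs_of_pos hDr]
  rw [habs]
  have hmoeb : |(ArithmeticFunction.moebius n : ℝ)| ≤ 1 := by
    have := ArithmeticFunction.abs_moebius_le_one (n := n)
    exact_mod_cast (by exact_mod_cast this : |((ArithmeticFunction.moebius n : ℤ):ℝ)| ≤ 1)
  have hgcd : (Nat.gcd (n * t) h : ℝ) ≤ h := by
    exact_mod_cast Nat.le_of_dvd hh (Nat.gcd_dvd_right _ _)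
  have hDrlow : ((t:ℝ) * (Nat.totient t : ℝ)) * ((n:ℝ) * (Real.sqrt n / Real.sqrt 2)) ≤
      ((n * t : ℕ):ℝ) * ((Nat.totient (n * t) : ℕ):ℝ) := by
    have h1 : Real.sqrt n / Real.sqrt 2 ≤ (Nat.totient n : ℝ) := by
      rw [div_le_iff₀ hsqrt2]
      calc Real.sqrt n ≤ Real.sqrt 2 * Nat.totient n := sqrt_le_totient n hn
        _ = (Nat.totient n : ℝ) * Real.sqrt 2 := by ring
    have h2 : (Nat.totient n : ℝ) * (Nat.totient t : ℝ) ≤ (Nat.totient (n*t) : ℝ) := by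
      exact_mod_cast Nat.totient_super_multiplicative n t
    calc ((t:ℝ) * (Nat.totient t : ℝ)) * ((n:ℝ) * (Real.sqrt n / Real.sqrt 2))
        ≤ ((t:ℝ) * (Nat.totient t : ℝ)) * ((n:ℝ) * (Nat.totient n : ℝ)) := by
          gcongr
      _ = ((n:ℝ) * (t:ℝ)) * ((Nat.totient n : ℝ) * (Nat.totient t : ℝ)) := by ring
      _ ≤ ((n*t : ℕ):ℝ) * ((Nat.totient (n*t) : ℕ):ℝ) := by
          push_cast
          gcongr
  have hsn : (0:ℝ) < Real.sqrt n := Real.sqrt_pos.mpr hnR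
  calc C * (|(ArithmeticFunction.moebius n : ℝ)| * (Nat.gcd (n * t) h : ℝ) /
        (((n * t : ℕ):ℝ) * ((Nat.totient (n * t) : ℕ):ℝ)))
      ≤ C * (1 * (h:ℝ) / (((t:ℝ) * (Nat.totient t : ℝ)) * ((n:ℝ) * (Real.sqrt n / Real.sqrt 2)))) := by
        gcongr
    _ = K * ((n:ℝ) * Real.sqrt n)⁻¹ := by
        rw [hK]
        field_simp
lemma wg_tsum_prime (hh : 0 < h) (ht : 0 < t) {p : ℕ} (hp : p.Prime) :
    ∑' e : ℕ, wg h t (p ^ e) = 1 + wg h t p := by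
  rw [tsum_eq_sum (s := ({0, 1} : Finset ℕ)) ?_]
  · rw [Finset.sum_pair (by norm_num : (0:ℕ) ≠ 1), pow_zero, pow_one, wg_one hh ht]
  · intro e he
    simp only [Finset.mem_insert, Finset.mem_singleton, not_or] at he
    have hμ : ArithmeticFunction.moebius (p ^ e) = 0 := by
      rw [ArithmeticFunction.moebius_apply_prime_pow hp he.1, if_neg he.2]
    simp [wg, hμ, pow_eq_zero_iff, hp.ne_zero]

lemma wg_prime_not_dvd (hh : 0 < h) (ht : 0 < t) {p : ℕ} (hp : p.Prime) (hnd : ¬ p ∣ t) :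
    1 + wg h t p = 1 - (Nat.gcd p h : ℝ) / ((p:ℝ) * ((p:ℝ) - 1)) := by
  have hφt : 0 < Nat.totient t := Nat.totient_pos.mpr ht
  have hg0 : 0 < Nat.gcd t h := Nat.gcd_pos_of_pos_left _ ht
  have hco : Nat.Coprime p t := (hp.coprime_iff_not_dvd).mpr hnd
  have hφ : Nat.totient (p * t) = (p - 1) * Nat.totient t := by
    rw [Nat.totient_mul hco, Nat.totient_prime hp]
  have htf : t.factorization p = 0 := Nat.factorization_eq_zero_of_not_dvd hnd
  have hμp : ArithmeticFunction.moebius p = -1 := ArithmeticFunction.moebius_apply_prime hp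
  have hpR : (0:ℝ) < (p:ℝ) - 1 := by
    have : (1:ℝ) < (p:ℝ) := by exact_mod_cast hp.one_lt
    linarith
  have hpR0 : (0:ℝ) < (p:ℝ) := by exact_mod_cast hp.pos
  have htR : (0:ℝ) < (t:ℝ) := by exact_mod_cast ht
  have hφtR : (0:ℝ) < (Nat.totient t : ℝ) := by exact_mod_cast hφt
  have hg0R : (0:ℝ) < (Nat.gcd t h : ℝ) := by exact_mod_cast hg0
  have hcast : ((p - 1 : ℕ) : ℝ) = (p:ℝ) - 1 := by
    push_cast [Nat.cast_sub hp.one_lt.le]; ring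
  have hG := gcdP hp ht.ne' hh.ne'
  rw [htf] at hG
  congr 1
  by_cases hph : p ∣ h
  · have hfh : ¬ h.factorization p ≤ 0 := by
      have := hp.factorization_pos_of_dvd hh.ne' hph
      omega
    rw [if_neg hfh] at hG
    have hgph : Nat.gcd p h = p := Nat.gcd_eq_left hph
    rw [wg, if_neg hp.ne_zero, hG, hφ, hgph, hμp]
    push_cast [hcast]
    field_simp
  · have hfh : h.factorization p ≤ 0 := by
      rw [Nat.factorization_eq_zero_of_not_dvd hph]
    rw [if_pos hfh, mul_one] at hG
    have hgph : Nat.gcd p h = 1 := (hp.coprime_iff_not_dvd).mpr hph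
    rw [wg, if_neg hp.ne_zero, hG, hφ, hgph, hμp]
    push_cast [hcast]
    field_simp

lemma wg_prime_dvd (hh : 0 < h) (ht : 0 < t) {p : ℕ} (hp : p.Prime) (hd : p ∣ t) :
    1 + wg h t p =
      1 - (if h.factorization p ≤ t.factorization p then 1 else (p:ℝ)) / (p:ℝ) ^ 2 := by
  have hφt : 0 < Nat.totient t := Nat.totient_pos.mpr ht
  have hg0 : 0 < Nat.gcd t h := Nat.gcd_pos_of_pos_left _ ht
  have hφ : Nat.totient (p * t) = p * Nat.totient t := Nat.totient_mul_of_prime_of_dvd hp hd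
  have hμp : ArithmeticFunction.moebius p = -1 := ArithmeticFunction.moebius_apply_prime hp
  have hpR0 : (0:ℝ) < (p:ℝ) := by exact_mod_cast hp.pos
  have htR : (0:ℝ) < (t:ℝ) := by exact_mod_cast ht
  have hφtR : (0:ℝ) < (Nat.totient t : ℝ) := by exact_mod_cast hφt
  have hg0R : (0:ℝ) < (Nat.gcd t h : ℝ) := by exact_mod_cast hg0
  have hG := gcdP hp ht.ne' hh.ne'
  congr 1
  by_cases hle : h.factorization p ≤ t.factorization p
  · rw [if_pos hle, mul_one] at hG
    rw [if_pos hle, wg, if_neg hp.ne_zero, hG, hφ, hμp]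
    push_cast
    field_simp
  · rw [if_neg hle] at hG
    rw [if_neg hle, wg, if_neg hp.ne_zero, hG, hφ, hμp]
    push_cast
    field_simp

end WagstaffAux

/-- `S(h,t,1) = (gcd(t,h)/t²)·∏_{p ∣ t, h_p ∣ t_p}(1+1/p)·∏_{p ∤ t}(1 - gcd(p,h)/(p(p-1)))`. -/
theorem wagstaff_m_one (h t : ℕ) (hh : 0 < h) (ht : 0 < t) :
    wagstaffS h t 1 = ((Nat.gcd t h : ℝ) / (t : ℝ) ^ 2) *
      (∏ p ∈ t.primeFactors, if ordProj[p] h ∣ ordProj[p] t then 1 + 1 / (p : ℝ) else 1) *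
      ∏' p : Nat.Primes,
        (if (p : ℕ) ∣ t then 1
         else 1 - (Nat.gcd (p : ℕ) h : ℝ) / ((p : ℝ) * ((p : ℝ) - 1))) := by
  have hφt : 0 < Nat.totient t := Nat.totient_pos.mpr ht
  have hg0 : 0 < Nat.gcd t h := Nat.gcd_pos_of_pos_left _ ht
  have htR : (0:ℝ) < (t:ℝ) := by exact_mod_cast ht
  have hφtR : (0:ℝ) < (Nat.totient t : ℝ) := by exact_mod_cast hφt
  have hg0R : (0:ℝ) < (Nat.gcd t h : ℝ) := by exact_mod_cast hg0
  set C : ℝ := (t : ℝ) * (Nat.totient t : ℝ) / (Nat.gcd t h : ℝ) with hC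
  have hCpos : 0 < C := by positivity
  -- Step 1: rewrite as C⁻¹ * ∑' wg
  have step1 : wagstaffS h t 1 = C⁻¹ * ∑' n, wg h t n := by
    rw [wagstaffS, ← tsum_mul_left]
    apply tsum_congr
    intro n
    rcases eq_or_ne n 0 with rfl | hn
    · simp [wg_zero]
    · rw [if_pos ⟨Nat.pos_of_ne_zero hn, one_dvd _⟩, wg, if_neg hn, ← hC,
        inv_mul_cancel_left₀ hCpos.ne']
  -- Step 2: Euler product
  have hmul : ∀ {m n : ℕ}, Nat.Coprime m n → wg h t (m * n) = wg h t m * wg h t n :=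
    fun hco => wg_mul hh ht hco
  have hEP := EulerProduct.eulerProduct_hasProd (f := wg h t) (wg_one hh ht) hmul
      (wg_summable hh ht) wg_zero
  set F : Nat.Primes → ℝ := fun p => 1 + wg h t (p : ℕ) with hF
  have hFeq : (fun p : Nat.Primes => ∑' e : ℕ, wg h t ((p:ℕ) ^ e)) = F := by
    funext p
    exact wg_tsum_prime hh ht p.prop
  rw [hFeq] at hEP
  have hMF : Multipliable F := ⟨_, hEP⟩
  have step2 : ∑' n, wg h t n = ∏' p : Nat.Primes, F p := hEP.tprod_eq.symm
  -- Step 3: split off the finite part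
  set Q : Nat.Primes → ℝ := fun p =>
    if (p : ℕ) ∣ t then 1
    else 1 - (Nat.gcd (p : ℕ) h : ℝ) / ((p : ℝ) * ((p : ℝ) - 1)) with hQ
  set R : Nat.Primes → ℝ := fun p =>
    if (p : ℕ) ∣ t then
      1 - (if h.factorization (p:ℕ) ≤ t.factorization (p:ℕ) then 1 else ((p:ℕ):ℝ)) / ((p:ℕ):ℝ)^2
    else 1 with hR
  have hRpos : ∀ p : Nat.Primes, 0 < R p := by
    intro p
    have hp2 : (2:ℝ) ≤ ((p:ℕ):ℝ) := by exact_mod_cast p.prop.two_le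
    have hpsq : (4:ℝ) ≤ ((p:ℕ):ℝ)^2 := by nlinarith
    have hd1 : (if h.factorization (p:ℕ) ≤ t.factorization (p:ℕ) then (1:ℝ) else ((p:ℕ):ℝ))
        / ((p:ℕ):ℝ)^2 < 1 := by
      rw [div_lt_one (by nlinarith)]
      split
      · nlinarith
      · nlinarith
    rw [hR]
    dsimp only
    split
    · linarith
    · norm_num
  have hFQR : ∀ p : Nat.Primes, F p = Q p * R p := by
    intro p
    rw [hF, hQ, hR]
    dsimp only
    by_cases hd : (p:ℕ) ∣ t
    · rw [if_pos hd, if_pos hd, one_mul]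
      exact wg_prime_dvd hh ht p.prop hd
    · rw [if_neg hd, if_neg hd, mul_one]
      exact wg_prime_not_dvd hh ht p.prop hd
  set S : Finset Nat.Primes := t.primeFactors.subtype Nat.Prime with hS
  have hRone : ∀ p : Nat.Primes, p ∉ S → R p = 1 := by
    intro p hp
    have : ¬ (p:ℕ) ∣ t := by
      intro hdvd
      exact hp (Finset.mem_subtype.mpr (Nat.mem_primeFactors.mpr ⟨p.prop, hdvd, ht.ne'⟩))
    rw [hR]
    dsimp only
    rw [if_neg this]
  have hMRinv : Multipliable (fun p => (R p)⁻¹) :=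
    multipliable_of_ne_finset_one (s := S) (fun p hp => by rw [hRone p hp]; norm_num)
  have hMR : Multipliable R :=
    multipliable_of_ne_finset_one (s := S) (fun p hp => hRone p hp)
  have hQFR : Q = fun p => F p * (R p)⁻¹ := by
    funext p
    rw [hFQR p, mul_assoc, mul_inv_cancel₀ (hRpos p).ne', mul_one]
  have hMQ : Multipliable Q := by
    rw [hQFR]
    exact hMF.mul hMRinv
  have step3 : ∏' p : Nat.Primes, F p = (∏' p : Nat.Primes, Q p) * ∏ p ∈ S, R p := by
    calc ∏' p : Nat.Primes, F p = ∏' p : Nat.Primes, (Q p * R p) := tprod_congr hFQR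
      _ = (∏' p, Q p) * ∏' p, R p := Multipliable.tprod_mul hMQ hMR
      _ = (∏' p, Q p) * ∏ p ∈ S, R p := by rw [tprod_eq_prod hRone]
  -- Step 4: finite product over primes dividing t
  have step4 : ∏ p ∈ S, R p =
      ∏ q ∈ t.primeFactors,
        (1 - (if h.factorization q ≤ t.factorization q then 1 else (q:ℝ)) / (q:ℝ)^2) := by
    have e1 : ∏ p ∈ S, R p = ∏ p ∈ S,
        (fun q : ℕ => (1 - (if h.factorization q ≤ t.factorization q then 1 else (q:ℝ)) / (q:ℝ)^2)) ↑p :=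
      Finset.prod_congr rfl (fun p hp => by
        have hd : (p:ℕ) ∣ t := (Nat.mem_primeFactors.mp (Finset.mem_subtype.mp hp)).2.1
        rw [hR]; dsimp only; rw [if_pos hd])
    have e2 := Finset.prod_subtype_eq_prod_filter (s := t.primeFactors)
        (fun q : ℕ => (1 - (if h.factorization q ≤ t.factorization q then 1 else (q:ℝ)) / (q:ℝ)^2))
        (p := Nat.Prime)
    have e3 : t.primeFactors.filter Nat.Prime = t.primeFactors :=
      Finset.filter_true_of_mem (fun q hq => Nat.prime_of_mem_primeFactors hq)
    rw [e1, hS]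
    exact e2.trans (by rw [e3])
  -- Step 5: the finite-product arithmetic identity
  have hordProj : ∀ q ∈ t.primeFactors,
      (if ordProj[q] h ∣ ordProj[q] t then 1 + 1/(q:ℝ) else 1)
      = (if h.factorization q ≤ t.factorization q then 1 + 1/(q:ℝ) else 1) := by
    intro q hq
    have hqp := Nat.prime_of_mem_primeFactors hq
    simp only [Nat.pow_dvd_pow_iff_le_right hqp.one_lt]
  have hprod_nat := Nat.totient_mul_prod_primeFactors t
  have hprod_real : (Nat.totient t : ℝ) * ∏ q ∈ t.primeFactors, (q:ℝ)
      = (t:ℝ) * ∏ q ∈ t.primeFactors, ((q - 1 : ℕ):ℝ) := by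
    rw [← Nat.cast_prod, ← Nat.cast_prod, ← Nat.cast_mul, ← Nat.cast_mul, hprod_nat]
  have hPpos : (0:ℝ) < ∏ q ∈ t.primeFactors, (q:ℝ) := by
    apply Finset.prod_pos
    intro q hq
    exact_mod_cast (Nat.prime_of_mem_primeFactors hq).pos
  have helem : ∀ q ∈ t.primeFactors,
      (1 - (if h.factorization q ≤ t.factorization q then 1 else (q:ℝ)) / (q:ℝ)^2) * (q:ℝ)
      = ((q - 1 : ℕ):ℝ) * (if h.factorization q ≤ t.factorization q then 1 + 1/(q:ℝ) else 1) := by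
    intro q hq
    have hqp := Nat.prime_of_mem_primeFactors hq
    have hq2 : (2:ℝ) ≤ (q:ℝ) := by exact_mod_cast hqp.two_le
    have hqne : (q:ℝ) ≠ 0 := by linarith
    have hcast : ((q - 1 : ℕ):ℝ) = (q:ℝ) - 1 := by
      push_cast [Nat.cast_sub hqp.one_lt.le]; ring
    rw [hcast]
    split
    · field_simp; ring
    · field_simp
  have key : (t:ℝ) * ∏ q ∈ t.primeFactors,
        (1 - (if h.factorization q ≤ t.factorization q then 1 else (q:ℝ)) / (q:ℝ)^2)
      = (Nat.totient t : ℝ) * ∏ q ∈ t.primeFactors,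
        (if h.factorization q ≤ t.factorization q then 1 + 1/(q:ℝ) else 1) := by
    apply mul_right_cancel₀ hPpos.ne'
    calc (t:ℝ) * (∏ q ∈ t.primeFactors,
          (1 - (if h.factorization q ≤ t.factorization q then 1 else (q:ℝ)) / (q:ℝ)^2)) *
          ∏ q ∈ t.primeFactors, (q:ℝ)
        = (t:ℝ) * ∏ q ∈ t.primeFactors,
            ((1 - (if h.factorization q ≤ t.factorization q then 1 else (q:ℝ)) / (q:ℝ)^2) * (q:ℝ)) := by
          rw [Finset.prod_mul_distrib]; ring
      _ = (t:ℝ) * ∏ q ∈ t.primeFactors,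
            (((q - 1 : ℕ):ℝ) * (if h.factorization q ≤ t.factorization q then 1 + 1/(q:ℝ) else 1)) := by
          rw [Finset.prod_congr rfl helem]
      _ = ((t:ℝ) * ∏ q ∈ t.primeFactors, ((q - 1 : ℕ):ℝ)) *
            ∏ q ∈ t.primeFactors, (if h.factorization q ≤ t.factorization q then 1 + 1/(q:ℝ) else 1) := by
          rw [Finset.prod_mul_distrib]; ring
      _ = ((Nat.totient t : ℝ) * ∏ q ∈ t.primeFactors, (q:ℝ)) *
            ∏ q ∈ t.primeFactors, (if h.factorization q ≤ t.factorization q then 1 + 1/(q:ℝ) else 1) := by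
          rw [hprod_real]
      _ = (Nat.totient t : ℝ) * (∏ q ∈ t.primeFactors,
            (if h.factorization q ≤ t.factorization q then 1 + 1/(q:ℝ) else 1)) *
            ∏ q ∈ t.primeFactors, (q:ℝ) := by ring
  -- assemble
  rw [step1, step2, step3, step4, Finset.prod_congr rfl hordProj]
  rw [hC]
  field_simp
  linear_combination (∏' p : Nat.Primes, Q p) * key
end

section
/- Let h, t, m be positive integers and let p be an odd prime not dividing m. If p does not divide t, then S(h,t,mp) = −S(h,t,m) / (p(p−1)/gcd(p,h) − 1); if p divides t, then S(h,t,mp) = S(h,t,m). -/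
open Polynomial

private lemma totient_sq_aux : ∀ n : ℕ, n ≤ (if 2 ∣ n then 2 else 1) * n.totient ^ 2 := by
  intro n
  induction n using Nat.recOnPosPrimePosCoprime with
  | prime_pow p k hp hk =>
    rw [Nat.totient_prime_pow hp hk]
    rcases eq_or_ne p 2 with rfl | hne
    · have h2 : 2 ∣ 2 ^ k := dvd_pow_self 2 hk.ne'
      rw [if_pos h2]
      calc (2:ℕ)^k ≤ 2 ^ (2*k-1) := Nat.pow_le_pow_right (by norm_num) (by omega)
        _ = 2 * (2 ^ (k - 1) * (2 - 1)) ^ 2 := by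
            rw [Nat.mul_one, ← pow_mul, ← pow_succ']
            congr 1
            omega
  
    · have hodd : ¬ 2 ∣ p ^ k := by
        intro hdvd
        exact hne ((Nat.prime_dvd_prime_iff_eq Nat.prime_two hp).1
          (Nat.Prime.dvd_of_dvd_pow Nat.prime_two hdvd)).symm
      rw [if_neg hodd, one_mul]
      have hp3 : 3 ≤ p := hp.two_le.lt_of_ne (Ne.symm hne)
      obtain ⟨q, rfl⟩ : ∃ q, p = q + 1 := ⟨p - 1, by omega⟩
      have hq2 : 2 ≤ q := by omega
      simp only [Nat.add_sub_cancel]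
      calc (q+1)^k ≤ (q+1) ^ (2*k-1) := Nat.pow_le_pow_right (by omega) (by omega)
        _ = (q+1)^(2*(k-1)) * (q+1) := by rw [← pow_succ]; congr 1; omega
        _ ≤ (q+1)^(2*(k-1)) * q^2 := Nat.mul_le_mul_left _ (by nlinarith)
        _ = ((q+1)^(k-1) * q) ^ 2 := by rw [mul_pow, ← pow_mul, Nat.mul_comm 2 (k-1)]
  | zero => simp
  | one => norm_num
  | coprime a b ha hb hab Ha Hb =>
    rw [Nat.totient_mul hab, mul_pow]
    by_cases h2a : 2 ∣ a
    · have h2b : ¬ 2 ∣ b := fun h2b => by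
        have := Nat.dvd_gcd h2a h2b
        rw [hab.gcd_eq_one] at this
        omega
      rw [if_pos h2a] at Ha
      rw [if_neg h2b, one_mul] at Hb
      rw [if_pos (h2a.mul_right b), show 2 * (a.totient^2 * b.totient^2)
        = (2 * a.totient^2) * b.totient^2 by ring]
      exact Nat.mul_le_mul Ha Hb
    · by_cases h2b : 2 ∣ b
      · rw [if_neg h2a, one_mul] at Ha
        rw [if_pos h2b] at Hb
        rw [if_pos (h2b.mul_left a), show 2 * (a.totient^2 * b.totient^2)
          = a.totient^2 * (2 * b.totient^2) by ring]
        exact Nat.mul_le_mul Ha Hb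
      · rw [if_neg h2a, one_mul] at Ha
        rw [if_neg h2b, one_mul] at Hb
        have : ¬ 2 ∣ a * b := by
          intro hd
          rcases (Nat.Prime.dvd_mul Nat.prime_two).1 hd with h | h
          exacts [h2a h, h2b h]
        rw [if_neg this, one_mul]
        exact Nat.mul_le_mul Ha Hb

private lemma totient_sq_bound (n : ℕ) : n ≤ 2 * n.totient ^ 2 := by
  refine (totient_sq_aux n).trans (Nat.mul_le_mul_right _ ?_)
  split <;> omega

private lemma wag_summable (h t : ℕ) (hh : 0 < h) (ht : 0 < t) (P : ℕ → Prop) [DecidablePred P] :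
    Summable (fun n : ℕ => if 0 < n ∧ P n then
      (ArithmeticFunction.moebius n : ℝ) * (Nat.gcd (n * t) h : ℝ) /
        (↑(n * t) * ↑(Nat.totient (n * t))) else 0) := by
  rw [← summable_abs_iff]
  have hsum : Summable (fun n : ℕ => (2 * h : ℝ) * (1 / (n:ℝ) ^ (3/2 : ℝ))) :=
    (Real.summable_one_div_nat_rpow.2 (by norm_num)).mul_left _
  refine hsum.of_nonneg_of_le (fun n => abs_nonneg _) fun n => ?_
  by_cases hc : 0 < n ∧ P n
  · rw [if_pos hc]
    obtain ⟨hn, -⟩ := hc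
    have hN : 0 < n * t := Nat.mul_pos hn ht
    have hφN : 0 < (n * t).totient := Nat.totient_pos.2 hN
    have hφn : 0 < n.totient := Nat.totient_pos.2 hn
    have hmu : |(ArithmeticFunction.moebius n : ℝ)| ≤ 1 := by
      by_cases hs : Squarefree n
      · rw [ArithmeticFunction.moebius_apply_of_squarefree hs]
        push_cast
        rw [abs_pow, abs_neg, abs_one, one_pow]
      · rw [ArithmeticFunction.moebius_eq_zero_of_not_squarefree hs]
        norm_num
    have hgcd : (Nat.gcd (n * t) h : ℝ) ≤ (h : ℝ) := by
      exact_mod_cast Nat.le_of_dvd hh (Nat.gcd_dvd_right _ _)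
    have hgcd0 : (0:ℝ) ≤ (Nat.gcd (n * t) h : ℝ) := Nat.cast_nonneg _
    have hdenom : (n:ℝ) * (n.totient : ℝ) ≤ ((n*t : ℕ) : ℝ) * ((n*t).totient : ℝ) := by
      have h1 : n ≤ n * t := Nat.le_mul_of_pos_right n ht
      have h2 : n.totient ≤ (n*t).totient :=
        Nat.le_of_dvd hφN (Nat.totient_dvd_of_dvd ⟨t, rfl⟩)
      exact_mod_cast Nat.mul_le_mul h1 h2
    have hd0 : (0:ℝ) < (n:ℝ) * (n.totient : ℝ) := by positivity
    have step1 : |(ArithmeticFunction.moebius n : ℝ) * (Nat.gcd (n * t) h : ℝ) /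
        (↑(n * t) * ↑(Nat.totient (n * t)))| ≤ (1 * h) / ((n:ℝ) * (n.totient : ℝ)) := by
      rw [abs_div, abs_mul]
      have habs : |((n*t : ℕ) : ℝ) * ((n*t).totient : ℝ)| = ((n*t : ℕ) : ℝ) * ((n*t).totient : ℝ) :=
        abs_of_pos (by positivity)
      rw [habs, abs_of_nonneg hgcd0]
      exact div_le_div₀ (by positivity) (mul_le_mul hmu hgcd hgcd0 zero_le_one) hd0 hdenom
    refine step1.trans ?_
    rw [one_mul]
    -- h / (n φ(n)) ≤ 2h / n^{3/2}
    have hx1 : (1:ℝ) ≤ (n:ℝ) := by exact_mod_cast hn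
    have hx0 : (0:ℝ) < (n:ℝ) := by linarith
    have hrpow : (n:ℝ) ^ (3/2 : ℝ) = (n:ℝ) * Real.sqrt (n:ℝ) := by
      rw [Real.sqrt_eq_rpow, show (3/2 : ℝ) = 1 + 1/2 by norm_num, Real.rpow_add hx0,
        Real.rpow_one]
    have hsqrt : Real.sqrt (n:ℝ) ≤ 2 * (n.totient : ℝ) := by
      have hb : (n:ℝ) ≤ (2 * (n.totient : ℝ)) ^ 2 := by
        have := totient_sq_bound n
        have : (n:ℝ) ≤ 2 * (n.totient : ℝ) ^ 2 := by exact_mod_cast this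
        nlinarith [sq_nonneg ((n.totient : ℝ))]
      calc Real.sqrt (n:ℝ) ≤ Real.sqrt ((2 * (n.totient : ℝ)) ^ 2) := Real.sqrt_le_sqrt hb
        _ = 2 * (n.totient : ℝ) := Real.sqrt_sq (by positivity)
    have hrp0 : (0:ℝ) < (n:ℝ) ^ (3/2 : ℝ) := by
      rw [hrpow]; positivity
    rw [mul_one_div, div_le_div_iff₀ hd0 hrp0, hrpow]
    have hs0 : (0:ℝ) ≤ Real.sqrt (n:ℝ) := Real.sqrt_nonneg _
    have hh0 : (0:ℝ) ≤ (h:ℝ) := Nat.cast_nonneg _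
    nlinarith [mul_le_mul_of_nonneg_left hsqrt (mul_nonneg hh0 hx0.le)]
  · rw [if_neg hc, abs_zero]
    positivity

/-- Removing an odd prime from `m`: for an odd prime `p ∤ m`,
`S(h,t,mp) = -S(h,t,m)/(p(p-1)/gcd(p,h) - 1)` if `p ∤ t`, and `S(h,t,mp) = S(h,t,m)` if `p ∣ t`. -/
theorem wagstaff_remove_odd_prime (h t m p : ℕ) (hh : 0 < h) (ht : 0 < t) (hm : 0 < m)
    (hp : p.Prime) (hpodd : Odd p) (hpm : ¬ p ∣ m) :
    (¬ p ∣ t → wagstaffS h t (m * p) =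
        -wagstaffS h t m / ((p : ℝ) * ((p : ℝ) - 1) / (Nat.gcd p h : ℝ) - 1)) ∧
    (p ∣ t → wagstaffS h t (m * p) = wagstaffS h t m) := by
  classical
  have hcopmp : Nat.Coprime m p := ((hp.coprime_iff_not_dvd).2 hpm).symm
  constructor
  · intro hpt
    have hp0 : 0 < p := hp.pos
    have hpne2 : p ≠ 2 := by
      rintro rfl
      exact (Nat.not_odd_iff_even.2 (even_two)) hpodd
    have hp3 : 3 ≤ p := by
      have := hp.two_le
      omega
    have hcoppt : Nat.Coprime p t := (hp.coprime_iff_not_dvd).2 hpt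
    -- real constants
    set P : ℝ := (p : ℝ) with hPdef
    have hP3 : (3:ℝ) ≤ P := by rw [hPdef]; exact_mod_cast hp3
    set G : ℝ := (Nat.gcd p h : ℝ) with hGdef
    have hG1 : (1:ℝ) ≤ G := by
      have h1 : 0 < Nat.gcd p h := Nat.gcd_pos_of_pos_left h hp0
      rw [hGdef]; exact_mod_cast h1
    have hGp : G ≤ P := by
      rw [hGdef, hPdef]; exact_mod_cast Nat.le_of_dvd hp0 (Nat.gcd_dvd_left p h)
    set c : ℝ := G / (P * (P - 1)) with hcdef
    -- the functions
    set v : ℕ → ℝ := fun n => (ArithmeticFunction.moebius n : ℝ) * (Nat.gcd (n * t) h : ℝ) /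
        (↑(n * t) * ↑(Nat.totient (n * t))) with hv
    set f : ℕ → ℝ := fun n => if 0 < n ∧ m ∣ n * t then v n else 0 with hf
    set f1 : ℕ → ℝ := fun n => if 0 < n ∧ (m ∣ n * t ∧ ¬ p ∣ n) then v n else 0 with hf1
    set f2 : ℕ → ℝ := fun n => if 0 < n ∧ (m ∣ n * t ∧ p ∣ n) then v n else 0 with hf2
    set g : ℕ → ℝ := fun n => if 0 < n ∧ m * p ∣ n * t then v n else 0 with hg
    -- summability
    have S1 : Summable f1 := wag_summable h t hh ht _
    have S2 : Summable f2 := wag_summable h t hh ht _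
    -- key pointwise value identity
    have key : ∀ n : ℕ, 0 < n → ¬ p ∣ n → v (p * n) = -c * v n := by
      intro n hn hpn
      have hcop : Nat.Coprime p (n * t) :=
        ((hp.coprime_iff_not_dvd).2 hpn).mul_right hcoppt
      have hmu : (ArithmeticFunction.moebius (p * n) : ℤ) =
          - ArithmeticFunction.moebius n := by
        rw [ArithmeticFunction.isMultiplicative_moebius.map_mul_of_coprime
          ((hp.coprime_iff_not_dvd).2 hpn), ArithmeticFunction.moebius_apply_prime hp]
        ring
      have hassoc : p * n * t = p * (n * t) := mul_assoc p n t
      have hgcdmul : Nat.gcd (p * (n * t)) h = Nat.gcd p h * Nat.gcd (n * t) h := by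
        rw [Nat.gcd_comm _ h, Nat.Coprime.gcd_mul h hcop, Nat.gcd_comm h p,
          Nat.gcd_comm h (n * t)]
      have htot : Nat.totient (p * (n * t)) = (p - 1) * Nat.totient (n * t) := by
        rw [Nat.totient_mul hcop, Nat.totient_prime hp]
      have hNpos : 0 < n * t := Nat.mul_pos hn ht
      have hφpos : 0 < Nat.totient (n * t) := Nat.totient_pos.2 hNpos
      simp only [hv]
      rw [hassoc, hgcdmul, htot, hmu]
      have hc1 : ((p - 1 : ℕ) : ℝ) = P - 1 := by
        have : 1 ≤ p := hp.one_le
        push_cast [this]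
        ring
      push_cast [hc1]
      have hN : (0:ℝ) < ((n * t : ℕ) : ℝ) := by exact_mod_cast hNpos
      have hφ : (0:ℝ) < ((Nat.totient (n * t) : ℕ) : ℝ) := by exact_mod_cast hφpos
      have hP0 : (0:ℝ) < P := by linarith
      have hP1 : (0:ℝ) < P - 1 := by linarith
      have hG0 : (0:ℝ) < G := by linarith
      rw [hcdef]
      field_simp
      ring
    -- support facts
    have hinj : Function.Injective (fun n : ℕ => p * n) :=
      fun a b hab => by simpa [Nat.mul_left_cancel_iff hp0] using hab
    have hrange : ∀ x : ℕ, p ∣ x → x ∈ Set.range (fun n : ℕ => p * n) := by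
      rintro x ⟨y, rfl⟩
      exact ⟨y, rfl⟩
    -- g is supported on multiples of p
    have hgsupp : Function.support g ⊆ Set.range (fun n : ℕ => p * n) := by
      intro x hx
      rw [Function.mem_support] at hx
      apply hrange
      by_contra hpx
      apply hx
      rw [hg]
      simp only
      rw [if_neg]
      rintro ⟨hx0, hdvd⟩
      exact hpx (hcoppt.dvd_of_dvd_mul_right (dvd_trans (Dvd.intro_left m rfl) hdvd))
    have hf2supp : Function.support f2 ⊆ Set.range (fun n : ℕ => p * n) := by
      intro x hx
      rw [Function.mem_support] at hx
      apply hrange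
      by_contra hpx
      apply hx
      rw [hf2]
      simp only
      rw [if_neg]
      rintro ⟨hx0, -, hdvd⟩
      exact hpx hdvd
    -- moebius vanishes on p * n when p ∣ n
    have hmu0 : ∀ n : ℕ, p ∣ n → (ArithmeticFunction.moebius (p * n) : ℝ) = 0 := by
      intro n hpn
      rw [ArithmeticFunction.moebius_eq_zero_of_not_squarefree, Int.cast_zero]
      intro hsq
      have := hsq p (by obtain ⟨k, rfl⟩ := hpn; exact ⟨k, by ring⟩)
      exact hp.one_lt.ne' (Nat.isUnit_iff.1 this)
    -- K1 : g (p * n) = -c * f1 n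
    have K1 : ∀ n : ℕ, g (p * n) = -c * f1 n := by
      intro n
      rcases Nat.eq_zero_or_pos n with rfl | hn
      · simp [hg, hf1]
      by_cases hpn : p ∣ n
      · have hv0 : v (p * n) = 0 := by
          simp only [hv]
          rw [hmu0 n hpn]
          simp
        have hB : ¬(0 < n ∧ (m ∣ n * t ∧ ¬ p ∣ n)) := by
          rintro ⟨-, -, hc⟩; exact hc hpn
        rw [hg, hf1]
        simp only
        rw [if_neg hB, mul_zero]
        split
        · exact hv0
        · rfl
      · have hcond : (0 < p * n ∧ m * p ∣ p * n * t) ↔ (0 < n ∧ (m ∣ n * t ∧ ¬ p ∣ n)) := by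
          constructor
          · rintro ⟨h1, h2⟩
            refine ⟨hn, ?_, hpn⟩
            have : m ∣ p * n * t := dvd_trans (Dvd.intro p rfl) h2
            rw [mul_assoc] at this
            exact hcopmp.dvd_of_dvd_mul_left this
          · rintro ⟨h1, h2, -⟩
            refine ⟨Nat.mul_pos hp0 h1, ?_⟩
            rw [mul_assoc]
            rw [mul_comm m p]
            exact Nat.mul_dvd_mul_left p h2
        rw [hg, hf1]
        simp only
        by_cases hC : 0 < n ∧ (m ∣ n * t ∧ ¬ p ∣ n)
        · rw [if_pos (hcond.2 hC), if_pos hC, key n hn hpn]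
        · rw [if_neg (fun hx => hC (hcond.1 hx)), if_neg hC, mul_zero]
    -- K2 : f2 (p * n) = -c * f1 n
    have K2 : ∀ n : ℕ, f2 (p * n) = -c * f1 n := by
      intro n
      rcases Nat.eq_zero_or_pos n with rfl | hn
      · simp [hf2, hf1]
      by_cases hpn : p ∣ n
      · have hv0 : v (p * n) = 0 := by
          simp only [hv]
          rw [hmu0 n hpn]
          simp
        have hB : ¬(0 < n ∧ (m ∣ n * t ∧ ¬ p ∣ n)) := by
          rintro ⟨-, -, hc⟩; exact hc hpn
        rw [hf2, hf1]
        simp only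
        rw [if_neg hB, mul_zero]
        split
        · exact hv0
        · rfl
      · have hcond : (0 < p * n ∧ (m ∣ p * n * t ∧ p ∣ p * n)) ↔
            (0 < n ∧ (m ∣ n * t ∧ ¬ p ∣ n)) := by
          constructor
          · rintro ⟨h1, h2, -⟩
            refine ⟨hn, ?_, hpn⟩
            rw [mul_assoc] at h2
            exact hcopmp.dvd_of_dvd_mul_left h2
          · rintro ⟨h1, h2, -⟩
            exact ⟨Nat.mul_pos hp0 h1, by rw [mul_assoc]; exact h2.mul_left p,
              Dvd.intro n rfl⟩
        rw [hf2, hf1]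
        simp only
        by_cases hC : 0 < n ∧ (m ∣ n * t ∧ ¬ p ∣ n)
        · rw [if_pos (hcond.2 hC), if_pos hC, key n hn hpn]
        · rw [if_neg (fun hx => hC (hcond.1 hx)), if_neg hC, mul_zero]
    -- tsum computations
    have hgsum : ∑' n, g n = -c * ∑' n, f1 n := by
      rw [← hinj.tsum_eq hgsupp]
      simp only [K1]
      exact tsum_mul_left
    have hf2sum : ∑' n, f2 n = -c * ∑' n, f1 n := by
      rw [← hinj.tsum_eq hf2supp]
      simp only [K2]
      exact tsum_mul_left
    have hfsplit : ∀ n, f n = f1 n + f2 n := by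
      intro n
      rw [hf, hf1, hf2]
      simp only
      by_cases hn : 0 < n ∧ m ∣ n * t
      · by_cases hpn : p ∣ n
        · rw [if_pos hn, if_neg (by rintro ⟨-, -, hc⟩; exact hc hpn),
            if_pos ⟨hn.1, hn.2, hpn⟩, zero_add]
        · rw [if_pos hn, if_pos ⟨hn.1, hn.2, hpn⟩,
            if_neg (by rintro ⟨-, -, hc⟩; exact hpn hc), add_zero]
      · rw [if_neg hn, if_neg (by rintro ⟨h1, h2, -⟩; exact hn ⟨h1, h2⟩),
          if_neg (by rintro ⟨h1, h2, -⟩; exact hn ⟨h1, h2⟩), add_zero]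
    have hfsum : ∑' n, f n = ∑' n, f1 n + ∑' n, f2 n := by
      rw [tsum_congr hfsplit]
      exact Summable.tsum_add S1 S2
    -- put everything together
    have hWmp : wagstaffS h t (m * p) = ∑' n, g n := rfl
    have hWm : wagstaffS h t m = ∑' n, f n := rfl
    set T : ℝ := ∑' n, f1 n with hT
    rw [hWmp, hWm, hgsum, hfsum, hf2sum]
    have hG0 : G ≠ 0 := by linarith
    have hP0 : (0:ℝ) < P := by linarith
    have hPP1 : P * (P - 1) ≠ 0 := by nlinarith
    have hD : P * (P - 1) / G - 1 ≠ 0 := by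
      have h1 : G < P * (P - 1) := by nlinarith
      have : (1:ℝ) < P * (P - 1) / G := (one_lt_div (by linarith)).2 h1
      linarith
    have hDG : P * (P - 1) - G ≠ 0 := by nlinarith
    rw [hcdef, eq_div_iff hD]
    have hP1 : P - 1 ≠ 0 := by linarith
    field_simp
    ring
  · intro hpt
    unfold wagstaffS
    refine tsum_congr fun n => ?_
    have : m * p ∣ n * t ↔ m ∣ n * t := by
      constructor
      · exact fun hd => dvd_trans (Dvd.intro p rfl) hd
      · intro hd
        exact hcopmp.mul_dvd_of_dvd_of_dvd hd (dvd_trans hpt (Dvd.intro_left n rfl))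
    simp only [this]
end
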